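/- Let μ, μ' ∈ ℝ with |μ − μ'| ≤ 1 and let N(μ,1), N(μ',1) be the corresponding unit-variance Gaussian measures on ℝ. Then (1/50)·|μ − μ'| ≤ d_TV( N(μ,1), N(μ',1) ) ≤ (1/2)·|μ − μ'|, and the upper bound d_TV( N(μ,1), N(μ',1) ) ≤ (1/2)·|μ − μ'| holds for all μ, μ' ∈ ℝ. -/

import Mathlib

/-! For `a ≤ b` the densities of `N(a,1)` and `N(b,1)` cross at the midpoint `m`, so no
measurable set separates the two laws better than `[m, ∞)`. Translating `N(b,1)` back to
`N(a,1)`, the mass difference on `[m, ∞)` is the `N(a,1)`-mass of an interval of length `b - a`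
centred at `a`. The density is at most `1/√(2π) ≤ 1/2` everywhere and at least
`e^{-1/8}/√(2π) ≥ 1/50` within distance `1/2` of `a`, which gives both bounds. -/

open MeasureTheory ProbabilityTheory

/-- Total variation distance between two measures on `ℝ`:
`d_TV(μ,ν) = sup over measurable sets B of |μ(B) − ν(B)|`. -/
noncomputable def dTV (μ ν : Measure ℝ) : ℝ :=
  ⨆ s : {s : Set ℝ // MeasurableSet s}, |(μ s.1).toReal - (ν s.1).toReal|

open Set
open scoped NNReal

lemma abs_measureReal_sub_le_dTV (P Q : Measure ℝ) [IsFiniteMeasure P] [IsFiniteMeasure Q]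
    {s : Set ℝ} (hs : MeasurableSet s) : |P.real s - Q.real s| ≤ dTV P Q := by
  refine le_ciSup (f := fun t : {s : Set ℝ // MeasurableSet s} => |P.real t.1 - Q.real t.1|)
    ⟨P.real univ + Q.real univ, ?_⟩ ⟨s, hs⟩
  rintro _ ⟨t, rfl⟩
  have hP := measureReal_mono (μ := P) (subset_univ t.1)
  have hQ := measureReal_mono (μ := Q) (subset_univ t.1)
  exact abs_sub_le_iff.2 ⟨by linarith [measureReal_nonneg (μ := Q) (s := t.1)],
    by linarith [measureReal_nonneg (μ := P) (s := t.1)]⟩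

lemma dTV_comm (P Q : Measure ℝ) : dTV P Q = dTV Q P :=
  iSup_congr fun _ => abs_sub_comm _ _

lemma dTV_le_of_forall_measureReal_sub_le (P Q : Measure ℝ) [IsProbabilityMeasure P]
    [IsProbabilityMeasure Q] {c : ℝ} (h : ∀ s, MeasurableSet s → Q.real s - P.real s ≤ c) :
    dTV P Q ≤ c := by
  refine Real.iSup_le (fun s => abs_sub_le_iff.2 ⟨?_, h s.1 s.2⟩) (by simpa using h ∅ .empty)
  have h_compl := h _ s.2.compl
  rw [probReal_compl_eq_one_sub s.2, probReal_compl_eq_one_sub s.2] at h_compl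
  change P.real s.1 - Q.real s.1 ≤ c
  linarith

theorem setIntegral_le_of_nonneg_on_of_nonpos_compl {α : Type*} [MeasurableSpace α]
    {μ : Measure α} {f : α → ℝ} {s t : Set α} (hf : Integrable f μ) (hs : MeasurableSet s)
    (ht : MeasurableSet t) (h_nonneg : ∀ x ∈ t, 0 ≤ f x) (h_nonpos : ∀ x ∉ t, f x ≤ 0) :
    ∫ x in s, f x ∂μ ≤ ∫ x in t, f x ∂μ := by
  rw [← integral_inter_add_sdiff ht hf.integrableOn]
  have h_sdiff : ∫ x in s \ t, f x ∂μ ≤ 0 :=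
    setIntegral_nonpos (hs.diff ht) fun x hx => h_nonpos x hx.2
  have h_inter : ∫ x in s ∩ t, f x ∂μ ≤ ∫ x in t, f x ∂μ :=
    setIntegral_mono_set hf.integrableOn (ae_restrict_of_forall_mem ht h_nonneg)
      inter_subset_right.eventuallyLE
  linarith

lemma gaussianPDFReal_le_gaussianPDFReal (v : ℝ≥0) {a b x : ℝ}
    (h : (x - b) ^ 2 ≤ (x - a) ^ 2) :
    gaussianPDFReal a v x ≤ gaussianPDFReal b v x := by
  simp only [gaussianPDFReal]
  gcongr

lemma gaussianPDFReal_one_le_half (a x : ℝ) : gaussianPDFReal a 1 x ≤ 1 / 2 := by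
  have h_sqrt : 2 ≤ √(2 * Real.pi) :=
    Real.le_sqrt_of_sq_le (by nlinarith [Real.pi_gt_three])
  have h_exp : Real.exp (-(x - a) ^ 2 / 2) ≤ 1 :=
    Real.exp_le_one_iff.2 (by nlinarith [sq_nonneg (x - a)])
  simp only [gaussianPDFReal, NNReal.coe_one, mul_one]
  calc (√(2 * Real.pi))⁻¹ * Real.exp (-(x - a) ^ 2 / 2) ≤ 2⁻¹ * 1 := by gcongr
    _ = 1 / 2 := by norm_num

lemma one_div_fifty_le_gaussianPDFReal_one {a x : ℝ} (hx : |x - a| ≤ 1 / 2) :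
    1 / 50 ≤ gaussianPDFReal a 1 x := by
  have h_sqrt : √(2 * Real.pi) ≤ 3 :=
    Real.sqrt_le_iff.2 ⟨by norm_num, by nlinarith [Real.pi_lt_d2]⟩
  have h_sq : (x - a) ^ 2 ≤ 1 / 4 := by nlinarith [sq_abs (x - a), abs_nonneg (x - a)]
  have h_exp : 7 / 8 ≤ Real.exp (-(x - a) ^ 2 / 2) := by
    linarith [Real.add_one_le_exp (-(x - a) ^ 2 / 2)]
  simp only [gaussianPDFReal, NNReal.coe_one, mul_one]
  calc (1 / 50 : ℝ) ≤ 3⁻¹ * (7 / 8) := by norm_num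
    _ ≤ (√(2 * Real.pi))⁻¹ * Real.exp (-(x - a) ^ 2 / 2) := by gcongr

lemma measureReal_gaussianReal (a : ℝ) {v : ℝ≥0} (hv : v ≠ 0) (s : Set ℝ) :
    (gaussianReal a v).real s = ∫ x in s, gaussianPDFReal a v x := by
  rw [measureReal_def, gaussianReal_apply_eq_integral a hv,
    ENNReal.toReal_ofReal (integral_nonneg fun x => gaussianPDFReal_nonneg _ _ _)]

lemma measureReal_gaussianReal_sub_le_Ici_midpoint {v : ℝ≥0} (hv : v ≠ 0) {a b : ℝ}
    (hab : a ≤ b) {s : Set ℝ} (hs : MeasurableSet s) :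
    (gaussianReal b v).real s - (gaussianReal a v).real s ≤
      (gaussianReal b v).real (Ici ((a + b) / 2)) -
        (gaussianReal a v).real (Ici ((a + b) / 2)) := by
  simp only [measureReal_gaussianReal _ hv]
  rw [← integral_sub (integrable_gaussianPDFReal b v).integrableOn
      (integrable_gaussianPDFReal a v).integrableOn,
    ← integral_sub (integrable_gaussianPDFReal b v).integrableOn
      (integrable_gaussianPDFReal a v).integrableOn]
  refine setIntegral_le_of_nonneg_on_of_nonpos_compl
    ((integrable_gaussianPDFReal b v).sub (integrable_gaussianPDFReal a v)) hs measurableSet_Ici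
    (fun x hx => sub_nonneg.2 (gaussianPDFReal_le_gaussianPDFReal v ?_))
    (fun x hx => sub_nonpos.2 (gaussianPDFReal_le_gaussianPDFReal v ?_))
  · have : (a + b) / 2 ≤ x := hx
    nlinarith
  · have : x < (a + b) / 2 := not_le.1 hx
    nlinarith

lemma measureReal_gaussianReal_Ici_sub (v : ℝ≥0) {a b : ℝ} (hab : a ≤ b) (m : ℝ) :
    (gaussianReal b v).real (Ici m) - (gaussianReal a v).real (Ici m) =
      (gaussianReal a v).real (Ico (m - (b - a)) m) := by
  have h_map : gaussianReal b v = (gaussianReal a v).map (· + (b - a)) := by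
    rw [gaussianReal_map_add_const, add_sub_cancel]
  have h_shift : (gaussianReal b v).real (Ici m) = (gaussianReal a v).real (Ici (m - (b - a))) := by
    rw [h_map, map_measureReal_apply (measurable_add_const _) measurableSet_Ici,
      preimage_add_const_Ici]
  rw [h_shift, ← Ici_sdiff_Ici,
    measureReal_sdiff (Ici_subset_Ici.2 (by linarith)) measurableSet_Ici]

lemma measureReal_gaussianReal_one_Ico_le (a : ℝ) {c d : ℝ} (hcd : c ≤ d) :
    (gaussianReal a 1).real (Ico c d) ≤ (d - c) / 2 := by
  rw [measureReal_gaussianReal a one_ne_zero]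
  calc ∫ x in Ico c d, gaussianPDFReal a 1 x
      ≤ ‖∫ x in Ico c d, gaussianPDFReal a 1 x‖ := Real.le_norm_self _
    _ ≤ 1 / 2 * volume.real (Ico c d) :=
      norm_setIntegral_le_of_norm_le_const measure_Ico_lt_top fun x _ => by
        rw [Real.norm_of_nonneg (gaussianPDFReal_nonneg _ _ _)]
        exact gaussianPDFReal_one_le_half a x
    _ = (d - c) / 2 := by rw [Real.volume_real_Ico_of_le hcd]; ring

lemma le_measureReal_gaussianReal_one_Ico {a c d : ℝ} (hcd : c ≤ d) (hc : a - 1 / 2 ≤ c)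
    (hd : d ≤ a + 1 / 2) : (d - c) / 50 ≤ (gaussianReal a 1).real (Ico c d) := by
  rw [measureReal_gaussianReal a one_ne_zero]
  calc (d - c) / 50 = 1 / 50 * volume.real (Ico c d) := by
        rw [Real.volume_real_Ico_of_le hcd]; ring
    _ ≤ ∫ x in Ico c d, gaussianPDFReal a 1 x :=
      setIntegral_ge_of_const_le_real measurableSet_Ico measure_Ico_lt_top.ne
        (fun x hx => one_div_fifty_le_gaussianPDFReal_one
          (abs_le.2 ⟨by linarith [hx.1], by linarith [hx.2]⟩))
        (integrable_gaussianPDFReal a 1).integrableOn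

lemma dTV_gaussianReal_one_le_of_le {a b : ℝ} (hab : a ≤ b) :
    dTV (gaussianReal a 1) (gaussianReal b 1) ≤ (b - a) / 2 := by
  refine dTV_le_of_forall_measureReal_sub_le _ _ fun s hs => ?_
  calc _ ≤ _ := measureReal_gaussianReal_sub_le_Ici_midpoint one_ne_zero hab hs
    _ = _ := measureReal_gaussianReal_Ici_sub 1 hab _
    _ ≤ (b - a) / 2 := (measureReal_gaussianReal_one_Ico_le a (by linarith)).trans_eq (by ring)

lemma le_dTV_gaussianReal_one_of_le {a b : ℝ} (hab : a ≤ b) (hba : b - a ≤ 1) :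
    (b - a) / 50 ≤ dTV (gaussianReal a 1) (gaussianReal b 1) := by
  set m := (a + b) / 2 with hm
  calc (b - a) / 50 ≤ (gaussianReal a 1).real (Ico (m - (b - a)) m) :=
        (le_measureReal_gaussianReal_one_Ico (by linarith) (by linarith) (by linarith)).trans_eq'
          (by ring)
    _ = (gaussianReal b 1).real (Ici m) - (gaussianReal a 1).real (Ici m) :=
        (measureReal_gaussianReal_Ici_sub 1 hab m).symm
    _ ≤ |(gaussianReal a 1).real (Ici m) - (gaussianReal b 1).real (Ici m)| :=
        (le_abs_self _).trans_eq (abs_sub_comm _ _)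
    _ ≤ _ := abs_measureReal_sub_le_dTV _ _ measurableSet_Ici

lemma dTV_gaussianReal_one_le (a b : ℝ) :
    dTV (gaussianReal a 1) (gaussianReal b 1) ≤ 1 / 2 * |a - b| := by
  rcases le_total a b with hab | hba
  · rw [abs_sub_comm, abs_of_nonneg (sub_nonneg.2 hab)]
    linarith [dTV_gaussianReal_one_le_of_le hab]
  · rw [dTV_comm, abs_of_nonneg (sub_nonneg.2 hba)]
    linarith [dTV_gaussianReal_one_le_of_le hba]

lemma le_dTV_gaussianReal_one {a b : ℝ} (h : |a - b| ≤ 1) :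
    1 / 50 * |a - b| ≤ dTV (gaussianReal a 1) (gaussianReal b 1) := by
  rcases le_total a b with hab | hba
  · rw [abs_sub_comm, abs_of_nonneg (sub_nonneg.2 hab)] at h ⊢
    linarith [le_dTV_gaussianReal_one_of_le hab h]
  · rw [abs_of_nonneg (sub_nonneg.2 hba)] at h ⊢
    rw [dTV_comm]
    linarith [le_dTV_gaussianReal_one_of_le hba h]

/-- For unit-variance Gaussians, if `|μ − μ'| ≤ 1` then
`(1/50)·|μ − μ'| ≤ d_TV(N(μ,1), N(μ',1)) ≤ (1/2)·|μ − μ'|`, and the upper bound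
holds for all means. -/
theorem gaussian_tv_bounds (μ μ' : ℝ) (h : |μ - μ'| ≤ 1) :
    (1 / 50) * |μ - μ'| ≤ dTV (gaussianReal μ 1) (gaussianReal μ' 1) ∧
    dTV (gaussianReal μ 1) (gaussianReal μ' 1) ≤ (1 / 2) * |μ - μ'| ∧
    ∀ a b : ℝ, dTV (gaussianReal a 1) (gaussianReal b 1) ≤ (1 / 2) * |a - b| :=
  ⟨le_dTV_gaussianReal_one h, dTV_gaussianReal_one_le μ μ', dTV_gaussianReal_one_le⟩
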